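/- Let G be a finite group and φ an endomorphism of G. Then for each k ≥ 0, |ker^(k)(φ) ∩ im(φ)| = a_2 · a_3 ⋯ a_{k+1}, where a_j = [ker^(j)(φ) : ker^(j−1)(φ)]. -/

import Mathlib

/-- The index `a_j = [ker^(j)(φ) : ker^(j-1)(φ)]` of consecutive iterated kernels. -/
noncomputable def kerIdx {G : Type*} [Group G] (φ : Monoid.End G) (j : ℕ) : ℕ :=
  (MonoidHom.ker (φ ^ (j - 1))).relIndex (MonoidHom.ker (φ ^ j))

/-!
`φ` maps `ker^(k+1)(φ)` onto `ker^(k)(φ) ∩ im(φ)` with kernel `ker(φ)`, so the left-hand side is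
the relative index `[ker^(k+1)(φ) : ker(φ)]`, which telescopes along the chain of iterated kernels
into the product of the `a_j`.
-/

namespace Monoid.End

variable {G : Type*} [Group G] (φ : Monoid.End G)

theorem mem_ker_pow {n : ℕ} {g : G} : g ∈ MonoidHom.ker (φ ^ n) ↔ φ^[n] g = 1 := Iff.rfl

theorem ker_pow_mono : Monotone fun n : ℕ => MonoidHom.ker (φ ^ n) := by
  intro m n hmn g hg
  obtain ⟨c, rfl⟩ := Nat.exists_eq_add_of_le' hmn
  rw [mem_ker_pow] at hg ⊢
  rw [Function.iterate_add_apply, hg, Function.iterate_fixed (map_one φ)]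

theorem map_ker_pow_succ (k : ℕ) :
    (MonoidHom.ker (φ ^ (k + 1))).map φ = MonoidHom.ker (φ ^ k) ⊓ MonoidHom.range φ := by
  ext x
  constructor
  · rintro ⟨g, hg, rfl⟩
    exact ⟨hg, g, rfl⟩
  · rintro ⟨hx, g, rfl⟩
    exact ⟨g, hx, rfl⟩

theorem relIndex_ker_ker_pow_succ (k : ℕ) :
    (MonoidHom.ker φ).relIndex (MonoidHom.ker (φ ^ (k + 1))) =
      ∏ j ∈ Finset.Icc 2 (k + 1), kerIdx φ j := by
  induction k with
  | zero => simp
  | succ k ih =>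
    rw [Finset.prod_Icc_succ_top (by omega), ← ih, kerIdx, Nat.add_sub_cancel]
    conv_lhs => rw [← pow_one φ]
    exact (Subgroup.relIndex_mul_relIndex _ _ _ (ker_pow_mono φ (by omega))
      (ker_pow_mono φ (by omega))).symm

end Monoid.End

theorem card_ker_inter_image_general (G : Type*) [Group G] (φ : Monoid.End G)
    (k : ℕ) :
    Nat.card (((MonoidHom.ker (φ ^ k) : Set G) ∩ Set.range φ : Set G)) =
      ∏ j ∈ Finset.Icc 2 (k + 1), kerIdx φ j := by
  calc Nat.card (((MonoidHom.ker (φ ^ k) : Set G) ∩ Set.range φ : Set G))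
      = Nat.card (MonoidHom.ker (φ ^ k) ⊓ MonoidHom.range φ : Subgroup G) := rfl
    _ = Nat.card ((MonoidHom.ker (φ ^ (k + 1))).map (φ : G →* G)) := by
        rw [← Monoid.End.map_ker_pow_succ]
    _ = (MonoidHom.ker φ).relIndex (MonoidHom.ker (φ ^ (k + 1))) :=
        (Subgroup.relIndex_ker _ (φ : G →* G)).symm
    _ = ∏ j ∈ Finset.Icc 2 (k + 1), kerIdx φ j := Monoid.End.relIndex_ker_ker_pow_succ φ k

theorem card_ker_inter_image (G : Type*) [Group G] [Finite G] (φ : Monoid.End G)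
    (k : ℕ) :
    Nat.card (((MonoidHom.ker (φ ^ k) : Set G) ∩ Set.range φ : Set G)) =
      ∏ j ∈ Finset.Icc 2 (k + 1), kerIdx φ j :=
  card_ker_inter_image_general G φ k
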